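/- Let S : Fin n → α and P : Fin m → β be sequences over linear orders. Then the number of positions i at which P has an order-preserving occurrence in S equals the number of positions i with i + m ≤ n such that E(P) is a prefix of the rank encoding of the suffix of S starting at i (i.e., for all j < m, E(j ↦ S(i+j), of length n−i)(j) = E(P)(j)). (This is why the number of order-preserving occurrences of P equals the size of the range of suffixes whose encodings are prefixed by E(P).) -/

import Mathlib

/- The rank encoding `E(s)` of a sequence `s : Fin m → α` over a linear order:
`E(s)(i) = d_i + 1` if `s i` equals some earlier character, and `d_i + 1/2` otherwise,
where `d_i` is the number of distinct values among `s 0, …, s (i-1)` strictly smaller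
than `s i`. -/
open Classical in
noncomputable def rankEncode {m : ℕ} {α : Type*} [LinearOrder α] (s : Fin m → α) :
    Fin m → ℚ := fun i =>
  ((((Finset.univ : Finset (Fin m)).filter (fun j : Fin m => (j : ℕ) < (i : ℕ))).image s).filter
      (fun a => a < s i)).card +
    (if ∃ j : Fin m, (j : ℕ) < (i : ℕ) ∧ s j = s i then 1 else 1/2)
/-- Two sequences of the same length over linear orders are order-isomorphic if
their characters compare the same way at every pair of positions. -/
def OrderIsoSeq {m : ℕ} {α β : Type*} [LinearOrder α] [LinearOrder β]
    (s : Fin m → α) (t : Fin m → β) : Prop :=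
  ∀ i j : Fin m, s i ≤ s j ↔ t i ≤ t j

/-- `P` has an order-preserving occurrence at position `i` in `S` if `i + m ≤ n` and
`P` is order-isomorphic to the window of `S` of length `m` starting at `i`. -/
def OPOccurAt {n m : ℕ} {α β : Type*} [LinearOrder α] [LinearOrder β]
    (S : Fin n → α) (P : Fin m → β) (i : ℕ) : Prop :=
  ∃ h : i + m ≤ n, OrderIsoSeq P (fun j : Fin m => S ⟨i + (j : ℕ), by have := j.isLt; omega⟩)

/-!
The rank encoding determines a sequence up to order isomorphism. Twice a code is
`2 d_i + 2` or `2 d_i + 1`, so by parity it exposes both the rank `d_i` of `s i` among the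
distinct earlier values and whether `s i` repeats one of them; these two data fix how `s i`
compares with every earlier entry, so order isomorphism follows by strong induction on `i`.
Since the code at position `j` only looks at positions `≤ j`, `E(P)` is a prefix of the
encoding of a suffix exactly when it is the encoding of the window of length `m`, so the two
sets of positions coincide.
-/

open Finset

lemma natCast_add_ite_eq_iff {a b : ℕ} {p q : Prop} [Decidable p] [Decidable q] :
    (a : ℚ) + (if p then 1 else 1 / 2) = b + (if q then 1 else 1 / 2) ↔ a = b ∧ (p ↔ q) := by
  have parity : ∀ c d : ℕ, (c : ℚ) + 1 ≠ d + 1 / 2 := fun c d h => by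
    have : ((2 * c + 2 : ℕ) : ℚ) = (2 * d + 1 : ℕ) := by push_cast; linarith
    have : 2 * c + 2 = 2 * d + 1 := by exact_mod_cast this
    omega
  split_ifs with hp hq hq
  · simp [hp, hq]
  · simpa [hp, hq] using parity a b
  · simpa [hp, hq] using (parity b a).symm
  · simp [hp, hq]

section Rank

variable {ι α β : Type*} [LinearOrder α] [LinearOrder β]

lemma card_filter_lt_lt_card_filter_lt_iff {V : Finset α} {x u : α} (hx : x ∈ V) :
    #{a ∈ V | a < x} < #{a ∈ V | a < u} ↔ x < u := by
  constructor
  · intro h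
    by_contra! hux
    refine h.not_ge (card_le_card fun a ha => ?_)
    simp only [mem_filter] at ha ⊢
    exact ⟨ha.1, ha.2.trans_le hux⟩
  · intro hxu
    refine card_lt_card ((ssubset_iff_of_subset fun a ha => ?_).2 ⟨x, ?_, ?_⟩)
    · simp only [mem_filter] at ha ⊢
      exact ⟨ha.1, ha.2.trans hxu⟩
    · simp [hx, hxu]
    · simp

lemma card_filter_lt_eq_card_filter_lt_iff {V : Finset α} {x u : α} (hx : x ∈ V) (hu : u ∈ V) :
    #{a ∈ V | a < x} = #{a ∈ V | a < u} ↔ x = u := by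
  refine ⟨fun h => ?_, fun h => h ▸ rfl⟩
  rcases lt_trichotomy x u with hxu | hxu | hxu
  · exact absurd h ((card_filter_lt_lt_card_filter_lt_iff hx).2 hxu).ne
  · exact hxu
  · exact absurd h ((card_filter_lt_lt_card_filter_lt_iff hu).2 hxu).ne'

lemma le_iff_le_of_card_filter_lt_eq {V : Finset α} {W : Finset β} {x u : α} {y v : β}
    (hx : x ∈ V) (hy : y ∈ W) (hxy : #{a ∈ V | a < x} = #{b ∈ W | b < y})
    (huv : #{a ∈ V | a < u} = #{b ∈ W | b < v}) (hmem : u ∈ V ↔ v ∈ W) :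
    (x ≤ u ↔ y ≤ v) ∧ (u ≤ x ↔ v ≤ y) := by
  have hlt : x < u ↔ y < v := by
    rw [← card_filter_lt_lt_card_filter_lt_iff hx, ← card_filter_lt_lt_card_filter_lt_iff hy,
      hxy, huv]
  have heq : x = u ↔ y = v := by
    by_cases hu : u ∈ V
    · rw [← card_filter_lt_eq_card_filter_lt_iff hx hu,
        ← card_filter_lt_eq_card_filter_lt_iff hy (hmem.1 hu), hxy, huv]
    · exact iff_of_false (by rintro rfl; exact hu hx) (by rintro rfl; exact hu (hmem.2 hy))
  constructor
  · rw [le_iff_lt_or_eq, le_iff_lt_or_eq, hlt, heq]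
  · rw [← not_lt, ← not_lt, hlt]

lemma card_image_eq_card_image {B : Finset ι} {s : ι → α} {t : ι → β}
    (h : ∀ a ∈ B, ∀ b ∈ B, s a = s b ↔ t a = t b) : #(B.image s) = #(B.image t) := by
  classical
  set C := B.image fun a => (s a, t a)
  have hfst : Set.InjOn Prod.fst (C : Set (α × β)) := by
    simp_all [Set.InjOn, C]
  have hsnd : Set.InjOn Prod.snd (C : Set (α × β)) := by
    simp_all [Set.InjOn, C]
  calc #(B.image s) = #(C.image Prod.fst) := by rw [image_image]; rfl
    _ = #(C.image Prod.snd) := by rw [card_image_of_injOn hfst, card_image_of_injOn hsnd]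
    _ = #(B.image t) := by rw [image_image]; rfl

lemma card_filter_image_lt_eq {B : Finset ι} {s : ι → α} {t : ι → β} {u : α} {v : β}
    (hst : ∀ a ∈ B, ∀ b ∈ B, s a = s b ↔ t a = t b) (huv : ∀ a ∈ B, s a < u ↔ t a < v) :
    #{x ∈ B.image s | x < u} = #{y ∈ B.image t | y < v} := by
  rw [filter_image, filter_image, filter_congr huv]
  exact card_image_eq_card_image fun a ha b hb => hst a (mem_filter.1 ha).1 b (mem_filter.1 hb).1

end Rank

section RankEncode

variable {m : ℕ} {α β : Type*} [LinearOrder α] [LinearOrder β]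

lemma rankEncode_apply (s : Fin m → α) (i : Fin m) :
    rankEncode s i =
      #{a ∈ (Iio i).image s | a < s i} + if s i ∈ (Iio i).image s then 1 else 1 / 2 := by
  unfold rankEncode
  congr
  · ext; simp
  · simp

lemma rankEncode_apply_eq_iff {s : Fin m → α} {t : Fin m → β} {i : Fin m} :
    rankEncode s i = rankEncode t i ↔
      #{a ∈ (Iio i).image s | a < s i} = #{b ∈ (Iio i).image t | b < t i} ∧
        (s i ∈ (Iio i).image s ↔ t i ∈ (Iio i).image t) := by
  rw [rankEncode_apply, rankEncode_apply, natCast_add_ite_eq_iff]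

lemma orderIsoSeq_comm {s : Fin m → α} {t : Fin m → β} :
    OrderIsoSeq s t ↔ OrderIsoSeq t s :=
  forall₂_congr fun _ _ => Iff.comm

lemma OrderIsoSeq.rankEncode_eq {s : Fin m → α} {t : Fin m → β} (h : OrderIsoSeq s t) :
    rankEncode s = rankEncode t := by
  have heq : ∀ a b, s a = s b ↔ t a = t b := fun a b => by
    rw [le_antisymm_iff, le_antisymm_iff, h, h]
  funext i
  refine rankEncode_apply_eq_iff.2
    ⟨card_filter_image_lt_eq (fun a _ b _ => heq a b) fun a _ => ?_, ?_⟩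
  · rw [← not_le, ← not_le, h]
  · simp only [mem_image, heq]

lemma orderIsoSeq_of_rankEncode_eq {s : Fin m → α} {t : Fin m → β}
    (h : rankEncode s = rankEncode t) : OrderIsoSeq s t := by
  have step : ∀ i, ∀ j < i, (s j ≤ s i ↔ t j ≤ t i) ∧ (s i ≤ s j ↔ t i ≤ t j) := by
    intro i
    induction i using WellFoundedLT.induction with | _ i ih => ?_
    have hle : ∀ a ∈ Iio i, ∀ b ∈ Iio i, s a ≤ s b ↔ t a ≤ t b := by
      intro a ha b hb
      rcases lt_trichotomy a b with hab | rfl | hab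
      · exact (ih b (mem_Iio.1 hb) a hab).1
      · exact iff_of_true le_rfl le_rfl
      · exact (ih a (mem_Iio.1 ha) b hab).2
    have heq : ∀ a ∈ Iio i, ∀ b ∈ Iio i, s a = s b ↔ t a = t b := fun a ha b hb => by
      rw [le_antisymm_iff, le_antisymm_iff, hle a ha b hb, hle b hb a ha]
    obtain ⟨hcard, hmem⟩ := rankEncode_apply_eq_iff.1 (congrFun h i)
    intro j hj
    refine le_iff_le_of_card_filter_lt_eq (mem_image_of_mem s (mem_Iio.2 hj))
      (mem_image_of_mem t (mem_Iio.2 hj)) ?_ hcard hmem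
    exact card_filter_image_lt_eq heq fun a ha => by
      rw [← not_le, ← not_le, hle j (mem_Iio.2 hj) a ha]
  intro i j
  rcases lt_trichotomy i j with hij | rfl | hij
  · exact (step j i hij).1
  · exact iff_of_true le_rfl le_rfl
  · exact (step i j hij).2

theorem rankEncode_eq_rankEncode_iff {s : Fin m → α} {t : Fin m → β} :
    rankEncode s = rankEncode t ↔ OrderIsoSeq s t :=
  ⟨orderIsoSeq_of_rankEncode_eq, OrderIsoSeq.rankEncode_eq⟩

lemma rankEncode_comp_castLE {N : ℕ} (s : Fin N → α) (h : m ≤ N) (j : Fin m) :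
    rankEncode (s ∘ Fin.castLE h) j = rankEncode s (Fin.castLE h j) := by
  rw [rankEncode_apply, rankEncode_apply, ← Fin.finsetImage_castLE_Iio, image_image]
  rfl

end RankEncode

/-- The number of order-preserving occurrences of `P` in `S` equals the number of positions
`i` (with `i + m ≤ n`) at which `E(P)` is a prefix of the rank encoding of the suffix of
`S` starting at `i`. -/
theorem ncard_opOccur_eq_ncard_prefix {n m : ℕ} {α β : Type*} [LinearOrder α] [LinearOrder β]
    (S : Fin n → α) (P : Fin m → β) :
    {i : ℕ | OPOccurAt S P i}.ncard =
      {i : ℕ | ∃ h : i + m ≤ n, ∀ j : Fin m,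
        rankEncode (fun k : Fin (n - i) => S ⟨i + (k : ℕ), by have := k.isLt; omega⟩)
            ⟨(j : ℕ), by have := j.isLt; omega⟩ =
          rankEncode P j}.ncard := by
  congr 1
  ext i
  refine exists_congr fun hi => ?_
  set w : Fin (n - i) → α := fun k => S ⟨i + k, by omega⟩
  have hm : m ≤ n - i := by omega
  calc OrderIsoSeq P (w ∘ Fin.castLE hm)
      ↔ rankEncode (w ∘ Fin.castLE hm) = rankEncode P := by
        rw [orderIsoSeq_comm, rankEncode_eq_rankEncode_iff]
    _ ↔ ∀ j, rankEncode w (Fin.castLE hm j) = rankEncode P j := by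
        simp only [funext_iff, rankEncode_comp_castLE]
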